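/- Let G be a finite group and A a complete local ring with residue field κ of characteristic prime to the order of G. Then for n ≥ 1, the group cohomology map Hⁿ(G, A^×) → Hⁿ(G, κ^×) induced by the quotient A → κ is an isomorphism, where G acts trivially on both A^× and κ^×. -/

import Mathlib

/-! The kernel `1 + 𝔪` of `Aˣ → κˣ` is uniquely `|G|`-divisible: `|G|`-th roots in it are unique
because `1 + u + ⋯ + u ^ (|G| - 1)` is a unit, and exist by Hensel's lemma applied to
`X ^ |G| - v`, which has the simple root `1` modulo `𝔪`. On a trivial `G`-module, summing a cochain
over its first argument is a contracting homotopy for multiplication by `|G|`, so the cohomology of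
`1 + 𝔪` vanishes in positive degrees, and the long exact sequence of
`1 → 1 + 𝔪 → Aˣ → κˣ → 1` makes `Hⁿ(G, Aˣ) → Hⁿ(G, κˣ)` an isomorphism for `n ≥ 1`. -/

open CategoryTheory

/-- The map of inhomogeneous cochain complexes induced by a morphism of representations,
given by postcomposition. -/
noncomputable def cochainsMap {k G : Type} [CommRing k] [Group G]
    {A B : Rep k G} (f : A ⟶ B) :
    groupCohomology.inhomogeneousCochains A ⟶ groupCohomology.inhomogeneousCochains B where
  f n := ModuleCat.ofHom ((f.hom : A →ₗ[k] B).compLeft (Fin n → G))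
  comm' i j hij := by
    obtain rfl : i + 1 = j := hij
    rw [groupCohomology.inhomogeneousCochains.d_def, groupCohomology.inhomogeneousCochains.d_def]
    ext (x : (Fin i → G) → A)
    simp [inhomogeneousCochains.d_hom_apply, LinearMap.compLeft, map_sum, Rep.hom_comm_apply, Function.comp_def]

/-- The map on group cohomology induced by a morphism of representations. -/
noncomputable def groupCohomologyMap {k G : Type} [CommRing k] [Group G]
    {A B : Rep k G} (f : A ⟶ B) (n : ℕ) :
    groupCohomology A n ⟶ groupCohomology B n :=
  HomologicalComplex.homologyMap (cochainsMap f) n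

/-- The morphism of trivial representations induced by a linear map. -/
def trivialRepHom {k G : Type} [CommRing k] [Group G]
    {M N : Type} [AddCommGroup M] [Module k M] [AddCommGroup N] [Module k N]
    (f : M →ₗ[k] N) : Rep.trivial k G M ⟶ Rep.trivial k G N :=
  Rep.ofHom ⟨f, fun _ => rfl⟩

/-- The `ℤ`-linear map on (additivized) unit groups induced by a ring homomorphism. -/
def unitsMapLinear {A B : Type} [CommRing A] [CommRing B] (f : A →+* B) :
    Additive Aˣ →ₗ[ℤ] Additive Bˣ :=
  (MonoidHom.toAdditive (Units.map (f : A →* B))).toIntLinearMap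

namespace IsLocalRing

open Polynomial

section

variable {A : Type} [CommRing A] [IsLocalRing A]

variable (A) in
noncomputable def principalUnits : Subgroup Aˣ :=
  (Units.map (residue A : A →* ResidueField A)).ker

theorem mem_principalUnits {u : Aˣ} : u ∈ principalUnits A ↔ residue A u = 1 := by
  simp [principalUnits, Units.ext_iff]

theorem unitsMapLinear_residue_surjective : Function.Surjective (unitsMapLinear (residue A)) :=
  surjective_units_map_of_local_ringHom _ residue_surjective inferInstance

theorem exact_principalUnits_unitsMapLinear :
    Function.Exact (MonoidHom.toAdditive (principalUnits A).subtype).toIntLinearMap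
      (unitsMapLinear (residue A)) :=
  fun x => ⟨fun hx => ⟨⟨Additive.toMul x, hx⟩, rfl⟩, by rintro ⟨y, rfl⟩; exact y.2⟩

theorem eq_one_of_pow_eq_one_of_mem_principalUnits {N : ℕ} (hN : (N : ResidueField A) ≠ 0)
    {u : Aˣ} (hu : u ∈ principalUnits A) (huN : u ^ N = 1) : u = 1 := by
  have hres : residue A u = 1 := mem_principalUnits.1 hu
  have hgeom : IsUnit (∑ i ∈ Finset.range N, (u : A) ^ i) := by
    refine (residue_ne_zero_iff_isUnit _).1 ?_
    simpa [hres] using hN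
  have : (∑ i ∈ Finset.range N, (u : A) ^ i) * ((u : A) - 1) = 0 := by
    rw [geom_sum_mul, ← Units.val_pow_eq_pow_val, huN, Units.val_one, sub_self]
  exact Units.ext (sub_eq_zero.1 (hgeom.mul_right_eq_zero.1 this))

theorem principalUnits_pow_injective {N : ℕ} (hN : (N : ResidueField A) ≠ 0) :
    Function.Injective (fun u : principalUnits A => u ^ N) := by
  intro u v huv
  rw [← mul_inv_eq_one]
  refine Subtype.ext (eq_one_of_pow_eq_one_of_mem_principalUnits hN (u * v⁻¹).2 ?_)
  rw [← Subgroup.coe_pow, mul_pow, inv_pow, mul_inv_eq_one.2 huv, Subgroup.coe_one]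

end

section

variable {A : Type} [CommRing A] [IsLocalRing A] [HenselianRing A (maximalIdeal A)] {N : ℕ}

theorem principalUnits_pow_surjective (hN : (N : ResidueField A) ≠ 0) :
    Function.Surjective (fun u : principalUnits A => u ^ N) := by
  have hN0 : N ≠ 0 := by rintro rfl; simp at hN
  rintro ⟨v, hv⟩
  have hres : residue A v = 1 := mem_principalUnits.1 hv
  obtain ⟨a, hroot, ha⟩ := HenselianRing.is_henselian (X ^ N - C (v : A))
    (monic_X_pow_sub_C _ hN0) 1
    ((residue_eq_zero_iff _).1 (by simp [hres]))
    (by simp only [derivative_sub, derivative_X_pow, derivative_C, sub_zero, eval_mul,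
      eval_pow, eval_X, one_pow, mul_one, eval_natCast, map_natCast]; exact isUnit_iff_ne_zero.2 hN)
  have haN : a ^ N = v := by simpa [sub_eq_zero] using hroot
  have hua : IsUnit a := (isUnit_pow_iff hN0).1 (haN ▸ v.isUnit)
  refine ⟨⟨hua.unit, mem_principalUnits.2 ?_⟩, Subtype.ext (Units.ext (by simpa using haN))⟩
  simpa [sub_eq_zero] using (residue_eq_zero_iff _).2 ha

theorem principalUnits_pow_bijective (hN : (N : ResidueField A) ≠ 0) :
    Function.Bijective (fun u : principalUnits A => u ^ N) :=
  ⟨principalUnits_pow_injective hN, principalUnits_pow_surjective hN⟩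

end

end IsLocalRing

namespace Fin

variable {α : Type*} {p : ℕ}

theorem contractNth_zero_cons (op : α → α → α) (x : α) (g : Fin (p + 1) → α) :
    contractNth 0 op (cons x g) = cons (op x (g 0)) (fun i => g i.succ) := by
  funext k
  refine Fin.cases ?_ (fun k => ?_) k
  · rw [contractNth_apply_of_eq _ _ _ _ (by simp)]; simp
  · rw [contractNth_apply_of_gt _ _ _ _ (by simp)]; simp

theorem contractNth_succ_cons (j : Fin (p + 1)) (op : α → α → α) (x : α)
    (g : Fin (p + 1) → α) :
    contractNth j.succ op (cons x g) = cons x (contractNth j op g) := by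
  funext k
  refine Fin.cases ?_ (fun k => ?_) k
  · rw [contractNth_apply_of_lt _ _ _ _ (by simp)]; simp
  · simp only [cons_succ]
    rcases lt_trichotomy (k : ℕ) (j : ℕ) with h | h | h
    · rw [contractNth_apply_of_lt _ _ _ _ (by simpa using h), contractNth_apply_of_lt _ _ _ _ h,
        ← succ_castSucc, cons_succ]
    · rw [contractNth_apply_of_eq _ _ _ _ (by simpa using h), contractNth_apply_of_eq _ _ _ _ h,
        ← succ_castSucc, cons_succ, cons_succ]
    · rw [contractNth_apply_of_gt _ _ _ _ (by simpa using h), contractNth_apply_of_gt _ _ _ _ h,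
        cons_succ]

end Fin

namespace groupCohomology

open Limits

variable {k G M : Type} [CommRing k] [AddCommGroup M] [Module k M] {p : ℕ}

def sumCons [Fintype G] (f : (Fin (p + 1) → G) → M) (g : Fin p → G) : M :=
  ∑ x, f (Fin.cons x g)

@[simp]
theorem sumCons_zero [Fintype G] : sumCons (0 : (Fin (p + 1) → G) → M) = 0 :=
  funext fun _ => Finset.sum_const_zero

variable [Group G]

theorem isIso_map_of_isZero {X : ShortComplex (Rep k G)} (hX : X.ShortExact) (n : ℕ)
    (h₀ : IsZero (groupCohomology X.X₁ n)) (h₁ : IsZero (groupCohomology X.X₁ (n + 1))) :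
    IsIso (map (MonoidHom.id G) X.g n) :=
  have : Mono (map (MonoidHom.id G) X.g n) :=
    (mapShortComplex₂_exact hX n).mono_g (h₀.eq_of_src _ _)
  have : Epi (map (MonoidHom.id G) X.g n) :=
    (mapShortComplex₃_exact hX rfl).epi_f (h₁.eq_of_tgt _ _)
  isIso_of_mono_of_epi _

theorem d_trivial_cons (f : (Fin (p + 1) → G) → M) (x : G) (g : Fin (p + 1) → G) :
    inhomogeneousCochains.d (Rep.trivial k G M) (p + 1) f (Fin.cons x g) =
      f g - f (Fin.cons (x * g 0) (fun i => g i.succ)) -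
        ∑ j : Fin (p + 1), (-1 : k) ^ ((j : ℕ) + 1) • f (Fin.cons x (Fin.contractNth j (· * ·) g)) := by
  rw [inhomogeneousCochains.d_hom_apply, Fin.sum_univ_succ, Fin.contractNth_zero_cons]
  simp_rw [Fin.contractNth_succ_cons, Fin.val_succ, pow_succ _ (_ + 1)]
  simp only [Representation.trivial_apply, Fin.cons_succ, Fin.val_zero, zero_add, pow_one,
    mul_neg_one, neg_smul, one_smul, Finset.sum_neg_distrib]
  abel

variable [Fintype G]

theorem d_sumCons_add_sumCons_d (f : (Fin (p + 1) → G) → M) :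
    inhomogeneousCochains.d (Rep.trivial k G M) p (sumCons f) +
      sumCons (inhomogeneousCochains.d (Rep.trivial k G M) (p + 1) f) = Fintype.card G • f := by
  funext g
  have hshift : ∑ x, f (Fin.cons (x * g 0) (fun i => g i.succ)) =
      ∑ x, f (Fin.cons x (fun i => g i.succ)) :=
    Fintype.sum_equiv (Equiv.mulRight (g 0)) _ _ fun _ => rfl
  rw [Pi.add_apply, Pi.smul_apply]
  unfold sumCons
  rw [Finset.sum_congr rfl fun x _ => d_trivial_cons f x g]
  simp only [Finset.sum_sub_distrib, hshift, Finset.sum_const, Finset.card_univ]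
  rw [Finset.sum_comm]
  simp only [inhomogeneousCochains.d_hom_apply, Representation.trivial_apply, Finset.smul_sum]
  abel

theorem isZero_groupCohomology_succ_trivial_of_bijective
    (hM : Function.Bijective (fun m : M => Fintype.card G • m)) (p : ℕ) :
    IsZero (groupCohomology (Rep.trivial k G M) (p + 1)) := by
  refine (HomologicalComplex.exactAt_iff_isZero_homology _ _).1 ?_
  rw [HomologicalComplex.exactAt_iff' _ p (p + 1) (p + 2) (by simp) (by simp),
    ShortComplex.moduleCat_exact_iff]
  intro (f : (Fin (p + 1) → G) → M) hf
  replace hf : inhomogeneousCochains.d (Rep.trivial k G M) (p + 1) f = 0 := by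
    have : (inhomogeneousCochains (Rep.trivial k G M)).d (p + 1) (p + 2) f = 0 := hf
    rwa [inhomogeneousCochains.d_def] at this
  have hcard (q : ℕ) : Function.Bijective (fun φ : (Fin q → G) → M => Fintype.card G • φ) :=
    hM.comp_left
  obtain ⟨f, rfl⟩ := (hcard _).2 f
  have hf' : inhomogeneousCochains.d (Rep.trivial k G M) (p + 1) f = 0 := by
    refine (hcard _).1 ?_
    beta_reduce
    rw [← map_nsmul, hf, smul_zero]
  refine ⟨sumCons f, ?_⟩
  show (inhomogeneousCochains (Rep.trivial k G M)).d p (p + 1) _ = _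
  rw [inhomogeneousCochains.d_def]
  beta_reduce
  rw [← d_sumCons_add_sumCons_d, hf', sumCons_zero, add_zero]

end groupCohomology

section TrivialShortComplex

variable {k G M₁ M₂ M₃ : Type} [CommRing k] [Group G] [AddCommGroup M₁] [Module k M₁]
  [AddCommGroup M₂] [Module k M₂] [AddCommGroup M₃] [Module k M₃]
  {f : M₁ →ₗ[k] M₂} {g : M₂ →ₗ[k] M₃}

variable (G) in
def trivialShortComplex (hfg : Function.Exact f g) : ShortComplex (Rep k G) :=
  ShortComplex.mk (trivialRepHom f) (trivialRepHom g) (by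
    ext x
    exact hfg.apply_apply_eq_zero x)

theorem trivialShortComplex_shortExact (hfg : Function.Exact f g) (hf : Function.Injective f)
    (hg : Function.Surjective g) : (trivialShortComplex G hfg).ShortExact where
  exact := (forget₂ (Rep k G) (ModuleCat k)).reflects_exact_of_faithful _ <|
    (ShortComplex.ShortExact.moduleCat_exact_iff_function_exact _).2 hfg
  mono_f := (Rep.mono_iff_injective _).2 hf
  epi_g := (Rep.epi_iff_surjective _).2 hg

end TrivialShortComplex

/-- Let `G` be a finite group and `A` a complete local ring with residue field `κ` of
characteristic prime to the order of `G`.  Then for `n ≥ 1`, the group cohomology map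
`Hⁿ(G, A^×) → Hⁿ(G, κ^×)` induced by the quotient `A → κ` is an isomorphism, where
`G` acts trivially on both `A^×` and `κ^×`. -/
theorem groupCohomology_units_of_complete_local_ring_iso
    (G : Type) [Group G] [Finite G]
    (A : Type) [CommRing A] [IsLocalRing A]
    [IsAdicComplete (IsLocalRing.maximalIdeal A) A]
    (hchar : (Nat.card G : IsLocalRing.ResidueField A) ≠ 0)
    (n : ℕ) (hn : 1 ≤ n) :
    IsIso (groupCohomologyMap
      (trivialRepHom (G := G) (unitsMapLinear (IsLocalRing.residue A))) n) := by
  have := Fintype.ofFinite G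
  rw [Nat.card_eq_fintype_card] at hchar
  obtain ⟨p, rfl⟩ := Nat.exists_eq_add_of_le' hn
  have hK (q : ℕ) : Limits.IsZero
      (groupCohomology (Rep.trivial ℤ G (Additive (IsLocalRing.principalUnits A))) (q + 1)) :=
    groupCohomology.isZero_groupCohomology_succ_trivial_of_bijective
      (IsLocalRing.principalUnits_pow_bijective hchar) q
  exact groupCohomology.isIso_map_of_isZero
    (trivialShortComplex_shortExact IsLocalRing.exact_principalUnits_unitsMapLinear
      Subtype.val_injective IsLocalRing.unitsMapLinear_residue_surjective) _ (hK p) (hK (p + 1))
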